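/- Let Z ∈ ℝ^{n×n} and suppose Z = U P is a polar decomposition, i.e., U ∈ ℝ^{n×n} is orthogonal and P ∈ ℝ^{n×n} is symmetric positive semidefinite. Then ‖Z − U‖_F ≤ ‖ZᵀZ − I‖_F, where I is the n×n identity matrix. In particular, any square matrix Z with ‖ZᵀZ − I‖_F = O(δ²) is within O(δ²) in Frobenius norm of an orthogonal matrix. -/

import Mathlib

/-!
Since `U` is orthogonal, `‖Z - U‖_F = ‖P - I‖_F` and `ZᵀZ = P²`, so it suffices that
`(P - I)² ≤ (P² - I)²` in the Loewner order: the difference is `(P - I)(P² + 2P)(P - I) ⪰ 0`.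
For the second claim every square `W` has a polar decomposition: `P = √(WᵀW)` satisfies
`‖P x‖ = ‖W x‖`, so `P x ↦ W x` is a well-defined isometry on the range of `P`, and it extends
to an orthogonal `U` of the whole space with `W = U P`.
-/

open Matrix

/-- Frobenius norm of a real square matrix. -/
noncomputable def frobNorm {n : ℕ} (X : Matrix (Fin n) (Fin n) ℝ) : ℝ :=
  Real.sqrt (∑ i, ∑ j, (X i j) ^ 2)

open scoped MatrixOrder ComplexOrder

theorem LinearMap.exists_linearIsometryEquiv_comp_eq_of_norm_eq
    {𝕜 E : Type*} [RCLike 𝕜] [NormedAddCommGroup E] [InnerProductSpace 𝕜 E]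
    [FiniteDimensional 𝕜 E] {S T : E →ₗ[𝕜] E} (h : ∀ x, ‖S x‖ = ‖T x‖) :
    ∃ U : E ≃ₗᵢ[𝕜] E, ∀ x, U (T x) = S x := by
  have hker : ker T ≤ ker S := fun x hx => by
    simpa [← norm_eq_zero (a := S x), h] using hx
  let L₀ : range T →ₗ[𝕜] E := (ker T).liftQ S hker ∘ₗ T.quotKerEquivRange.symm.toLinearMap
  have hL₀ (x : E) : L₀ ⟨T x, mem_range_self T x⟩ = S x := by
    simp only [L₀, coe_comp, LinearEquiv.coe_coe, Function.comp_apply,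
      quotKerEquivRange_symm_apply_image, Submodule.mkQ_apply, Submodule.liftQ_apply]
  let L : range T →ₗᵢ[𝕜] E :=
    { L₀ with
      norm_map' := by
        rintro ⟨_, x, rfl⟩
        simpa [hL₀] using h x }
  refine ⟨L.extend.toLinearIsometryEquiv rfl, fun x => ?_⟩
  exact (L.extend_apply ⟨T x, mem_range_self T x⟩).trans (hL₀ x)

namespace Matrix

variable {𝕜 n : Type*} [RCLike 𝕜] [Fintype n] [DecidableEq n]

theorem norm_toEuclideanLin_apply_eq_of_conjTranspose_mul_self_eq {A B : Matrix n n 𝕜}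
    (h : Aᴴ * A = Bᴴ * B) (x : EuclideanSpace 𝕜 n) :
    ‖toEuclideanLin A x‖ = ‖toEuclideanLin B x‖ := by
  have hT (M : Matrix n n 𝕜) : toEuclideanCLM (𝕜 := 𝕜) (Mᴴ * M) =
      (toEuclideanCLM (𝕜 := 𝕜) M).adjoint ∘L toEuclideanCLM (𝕜 := 𝕜) M := by
    rw [← star_eq_conjTranspose, map_mul, map_star, ContinuousLinearMap.star_eq_adjoint,
      ContinuousLinearMap.mul_def]
  rw [← coe_toEuclideanCLM_eq_toEuclideanLin, ← coe_toEuclideanCLM_eq_toEuclideanLin,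
    ContinuousLinearMap.coe_coe, ContinuousLinearMap.coe_coe,
    ContinuousLinearMap.apply_norm_eq_sqrt_inner_adjoint_left, ← hT, h, hT,
    ← ContinuousLinearMap.apply_norm_eq_sqrt_inner_adjoint_left]

theorem exists_mem_unitaryGroup_mul_eq_of_conjTranspose_mul_self_eq {A B : Matrix n n 𝕜}
    (h : Aᴴ * A = Bᴴ * B) : ∃ U ∈ unitaryGroup n 𝕜, A = U * B := by
  let T := toEuclideanCLM (n := n) (𝕜 := 𝕜)
  obtain ⟨V, hV⟩ := LinearMap.exists_linearIsometryEquiv_comp_eq_of_norm_eq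
    (norm_toEuclideanLin_apply_eq_of_conjTranspose_mul_self_eq h)
  let u := Unitary.linearIsometryEquiv.symm V
  have hTA : T A = T (T.symm u * B) := by
    rw [map_mul, StarAlgEquiv.apply_symm_apply]
    ext1 x
    exact (hV x).symm
  exact ⟨T.symm u, Unitary.map_mem T.symm u.2, T.injective hTA⟩

theorem exists_polarDecomposition (W : Matrix n n 𝕜) :
    ∃ U ∈ unitaryGroup n 𝕜, ∃ P : Matrix n n 𝕜, P.PosSemidef ∧ W = U * P := by
  let P := CFC.sqrt (Wᴴ * W)
  have hP : P.PosSemidef := nonneg_iff_posSemidef.mp (CFC.sqrt_nonneg _)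
  have hPP : Pᴴ * P = Wᴴ * W := by
    rw [hP.1.eq, CFC.sqrt_mul_sqrt_self _ (posSemidef_conjTranspose_mul_self W).nonneg]
  obtain ⟨U, hU, hWU⟩ := exists_mem_unitaryGroup_mul_eq_of_conjTranspose_mul_self_eq hPP.symm
  exact ⟨U, hU, P, hP, hWU⟩

theorem PosSemidef.sub_one_mul_self_le {P : Matrix n n 𝕜} (hP : P.PosSemidef) :
    (P - 1) * (P - 1) ≤ (P * P - 1) * (P * P - 1) := by
  have hPP : (Pᴴ * P + (P + P)).PosSemidef :=
    (posSemidef_conjTranspose_mul_self P).add (hP.add hP)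
  have key := hPP.conjTranspose_mul_mul_same (P - 1)
  rw [conjTranspose_sub, conjTranspose_one, hP.1.eq] at key
  rw [le_iff]
  convert key using 1
  noncomm_ring

end Matrix

section Frobenius

variable {n : ℕ}

theorem frobNorm_eq_sqrt_trace (X : Matrix (Fin n) (Fin n) ℝ) :
    frobNorm X = √(Xᵀ * X).trace := by
  rw [frobNorm, Finset.sum_comm]
  simp [trace, mul_apply, sq]

theorem frobNorm_le_of_transpose_mul_self_le {X Y : Matrix (Fin n) (Fin n) ℝ} (h : Xᵀ * X ≤ Yᵀ * Y) :
    frobNorm X ≤ frobNorm Y := by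
  rw [frobNorm_eq_sqrt_trace, frobNorm_eq_sqrt_trace]
  exact Real.sqrt_le_sqrt (by simpa [trace_sub] using (le_iff.mp h).trace_nonneg)

theorem frobNorm_orthogonal_mul {U : Matrix (Fin n) (Fin n) ℝ} (hU : Uᵀ * U = 1)
    (X : Matrix (Fin n) (Fin n) ℝ) : frobNorm (U * X) = frobNorm X := by
  rw [frobNorm_eq_sqrt_trace, frobNorm_eq_sqrt_trace, transpose_mul, mul_assoc, ← mul_assoc Uᵀ,
    hU, one_mul]

theorem frobNorm_sub_le_of_eq_mul_posSemidef {Z U P : Matrix (Fin n) (Fin n) ℝ}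
    (hU : Uᵀ * U = 1) (hP : P.PosSemidef) (hZ : Z = U * P) :
    frobNorm (Z - U) ≤ frobNorm (Zᵀ * Z - 1) := by
  have hPt : Pᵀ = P := hP.1.eq
  have hZZ : Zᵀ * Z = P * P := by
    rw [hZ, transpose_mul, mul_assoc, ← mul_assoc Uᵀ, hU, one_mul, hPt]
  calc frobNorm (Z - U) = frobNorm (P - 1) := by
        rw [hZ, ← mul_sub_one, frobNorm_orthogonal_mul hU]
    _ ≤ frobNorm (P * P - 1) := by
        apply frobNorm_le_of_transpose_mul_self_le
        simpa [transpose_sub, hPt, transpose_mul] using hP.sub_one_mul_self_le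
    _ = frobNorm (Zᵀ * Z - 1) := by rw [hZZ]

end Frobenius

/-- If `Z = U P` is a polar decomposition (`U` orthogonal, `P` symmetric positive
semidefinite), then `‖Z − U‖_F ≤ ‖ZᵀZ − I‖_F`. In particular, every square matrix
`Z` is within `‖ZᵀZ − I‖_F` in Frobenius norm of an orthogonal matrix. -/
theorem dist_to_polar_factor_le {n : ℕ} (Z U P : Matrix (Fin n) (Fin n) ℝ)
    (hU : Uᵀ * U = 1) (hP : P.PosSemidef) (hZ : Z = U * P) :
    frobNorm (Z - U) ≤ frobNorm (Zᵀ * Z - 1) ∧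
    ∀ W : Matrix (Fin n) (Fin n) ℝ, ∃ V : Matrix (Fin n) (Fin n) ℝ,
      Vᵀ * V = 1 ∧ frobNorm (W - V) ≤ frobNorm (Wᵀ * W - 1) := by
  refine ⟨frobNorm_sub_le_of_eq_mul_posSemidef hU hP hZ, fun W => ?_⟩
  obtain ⟨V, hV, Q, hQ, hW⟩ := exists_polarDecomposition W
  have hVV : Vᵀ * V = 1 := by
    simpa [star_eq_conjTranspose, conjTranspose_eq_transpose_of_trivial] using
      mem_unitaryGroup_iff'.mp hV
  exact ⟨V, hVV, frobNorm_sub_le_of_eq_mul_posSemidef hVV hQ hW⟩
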